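/- arXiv:1512.08165 — 9 statements merged into one kernel-verified Lean document; each statement's English description precedes it below -/
import Mathlib

section
/- Let u be an element of the free group F on two generators a, b with u ≠ 1 and ũ = u⁻¹, where ũ denotes the image of u under the homomorphism F → F sending a ↦ b⁻¹ and b ↦ a⁻¹. Then the (2,1)-entry of ρ(u) equals r times the (1,2)-entry of ρ(u), i.e. u₂₁ = r·u₁₂. -/
open Matrix

/-- The free group on two generators `a, b` (indexed by `Fin 2`). -/
abbrev F2 := FreeGroup (Fin 2)

/-- The generator `a`. -/
def ga : F2 := FreeGroup.of 0

/-- The generator `b`. -/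
def gb : F2 := FreeGroup.of 1

/-- The homomorphism `u ↦ ũ` sending `a ↦ b⁻¹` and `b ↦ a⁻¹`. -/
def tilde : F2 →* F2 := FreeGroup.lift ![gb⁻¹, ga⁻¹]

abbrev SL2C := Matrix.SpecialLinearGroup (Fin 2) ℂ

theorem stmt0 (M r : ℂ) (hM : M ≠ 0) (hr : r ≠ 0)
    (ρ : F2 →* SL2C)
    (ha : (ρ ga : Matrix (Fin 2) (Fin 2) ℂ) = !![M, 1; 0, M⁻¹])
    (hb : (ρ gb : Matrix (Fin 2) (Fin 2) ℂ) = !![M, 0; r, M⁻¹])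
    (u : F2) (hu : u ≠ 1) (hut : tilde u = u⁻¹) :
    (ρ u : Matrix (Fin 2) (Fin 2) ℂ) 1 0 = r * (ρ u : Matrix (Fin 2) (Fin 2) ℂ) 0 1 := by
  set D : Matrix (Fin 2) (Fin 2) ℂ := !![1, 0; 0, r] with hD
  have hainv : (ρ ga⁻¹ : Matrix (Fin 2) (Fin 2) ℂ) = !![M⁻¹, -1; 0, M] := by
    rw [map_inv, Matrix.SpecialLinearGroup.coe_inv, ha, Matrix.adjugate_fin_two]
    norm_num
  have hbinv : (ρ gb⁻¹ : Matrix (Fin 2) (Fin 2) ℂ) = !![M⁻¹, 0; -r, M] := by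
    rw [map_inv, Matrix.SpecialLinearGroup.coe_inv, hb, Matrix.adjugate_fin_two]
    norm_num
  -- the inverse step, for any x satisfying the equation
  have inv_step : ∀ x : F2,
      (ρ (tilde x) : Matrix (Fin 2) (Fin 2) ℂ) * D = D * ((ρ x⁻¹ : Matrix (Fin 2) (Fin 2) ℂ))ᵀ →
      (ρ (tilde x⁻¹) : Matrix (Fin 2) (Fin 2) ℂ) * D
        = D * ((ρ x⁻¹⁻¹ : Matrix (Fin 2) (Fin 2) ℂ))ᵀ := by
    intro x ih
    have hA : (ρ (tilde x⁻¹) : Matrix (Fin 2) (Fin 2) ℂ)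
        * (ρ (tilde x) : Matrix (Fin 2) (Fin 2) ℂ) = 1 := by
      rw [← Matrix.SpecialLinearGroup.coe_mul, ← _root_.map_mul, ← _root_.map_mul,
        inv_mul_cancel, _root_.map_one, _root_.map_one, Matrix.SpecialLinearGroup.coe_one]
    have hB : ((ρ x⁻¹ : Matrix (Fin 2) (Fin 2) ℂ))ᵀ
        * ((ρ x⁻¹⁻¹ : Matrix (Fin 2) (Fin 2) ℂ))ᵀ = 1 := by
      rw [← Matrix.transpose_mul, ← Matrix.SpecialLinearGroup.coe_mul, ← _root_.map_mul,
        inv_mul_cancel, _root_.map_one, Matrix.SpecialLinearGroup.coe_one,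
        Matrix.transpose_one]
    calc (ρ (tilde x⁻¹) : Matrix (Fin 2) (Fin 2) ℂ) * D
        = (ρ (tilde x⁻¹) : Matrix (Fin 2) (Fin 2) ℂ) * (D *
            (((ρ x⁻¹ : Matrix (Fin 2) (Fin 2) ℂ))ᵀ *
            ((ρ x⁻¹⁻¹ : Matrix (Fin 2) (Fin 2) ℂ))ᵀ)) := by
          rw [hB, Matrix.mul_one]
      _ = ((ρ (tilde x⁻¹) : Matrix (Fin 2) (Fin 2) ℂ) *
            ((ρ (tilde x) : Matrix (Fin 2) (Fin 2) ℂ) * D)) *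
            ((ρ x⁻¹⁻¹ : Matrix (Fin 2) (Fin 2) ℂ))ᵀ := by
          rw [ih]; noncomm_ring
      _ = D * ((ρ x⁻¹⁻¹ : Matrix (Fin 2) (Fin 2) ℂ))ᵀ := by
          rw [← Matrix.mul_assoc, hA, Matrix.one_mul]
  have key : ∀ v : F2,
      (ρ (tilde v) : Matrix (Fin 2) (Fin 2) ℂ) * D
        = D * ((ρ v⁻¹ : Matrix (Fin 2) (Fin 2) ℂ))ᵀ := by
    intro v
    induction v using FreeGroup.induction_on with
    | C1 => simp
    | of i =>
      fin_cases i
      · show (ρ (tilde ga) : Matrix (Fin 2) (Fin 2) ℂ) * D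
            = D * ((ρ ga⁻¹ : Matrix (Fin 2) (Fin 2) ℂ))ᵀ
        have hta : tilde ga = gb⁻¹ := by simp [tilde, ga]
        rw [hta, hbinv, hainv, hD]
        ext i j
        fin_cases i <;> fin_cases j <;>
          simp [Matrix.mul_apply, Fin.sum_univ_two, Matrix.transpose_apply, Matrix.vecHead, Matrix.vecTail, mul_comm]
      · show (ρ (tilde gb) : Matrix (Fin 2) (Fin 2) ℂ) * D
            = D * ((ρ gb⁻¹ : Matrix (Fin 2) (Fin 2) ℂ))ᵀ
        have htb : tilde gb = ga⁻¹ := by simp [tilde, gb]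
        rw [htb, hainv, hbinv, hD]
        ext i j
        fin_cases i <;> fin_cases j <;>
          simp [Matrix.mul_apply, Fin.sum_univ_two, Matrix.transpose_apply, Matrix.vecHead, Matrix.vecTail, mul_comm]
    | inv_of i ih => exact inv_step _ ih
    | mul x y ihx ihy =>
      have hxy : ((ρ (x * y)⁻¹ : Matrix (Fin 2) (Fin 2) ℂ))ᵀ
          = ((ρ x⁻¹ : Matrix (Fin 2) (Fin 2) ℂ))ᵀ * ((ρ y⁻¹ : Matrix (Fin 2) (Fin 2) ℂ))ᵀ := by
        rw [_root_.mul_inv_rev, _root_.map_mul, Matrix.SpecialLinearGroup.coe_mul,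
          Matrix.transpose_mul]
      rw [_root_.map_mul, _root_.map_mul, Matrix.SpecialLinearGroup.coe_mul, hxy,
        Matrix.mul_assoc, ihy, ← Matrix.mul_assoc, ihx, Matrix.mul_assoc]
  have hk := key u
  rw [hut] at hk
  have hadj : (ρ u⁻¹ : Matrix (Fin 2) (Fin 2) ℂ)
      = !![(ρ u : Matrix (Fin 2) (Fin 2) ℂ) 1 1, -(ρ u : Matrix (Fin 2) (Fin 2) ℂ) 0 1;
           -(ρ u : Matrix (Fin 2) (Fin 2) ℂ) 1 0, (ρ u : Matrix (Fin 2) (Fin 2) ℂ) 0 0] := by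
    rw [map_inv, Matrix.SpecialLinearGroup.coe_inv, Matrix.adjugate_fin_two]
  rw [hadj, hD] at hk
  have h10 := congrFun (congrFun hk 1) 0
  simp [Matrix.mul_apply, Fin.sum_univ_two] at h10
  exact h10
end

section
/- Let w be an element of the free group F on two generators a, b with w ≠ 1 and w̃ = w⁻¹. Then ρ(w)ρ(a) = ρ(b)ρ(w) if and only if w₁₁ − (M − M⁻¹)w₁₂ = 0 (this expression is the Riley polynomial condition). -/
open Matrix

lemma key (M r : ℂ) (hM : M ≠ 0) (hr : r ≠ 0) (ρ : F2 →* SL2C)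
    (ha : (ρ ga : Matrix (Fin 2) (Fin 2) ℂ) = !![M, 1; 0, M⁻¹])
    (hb : (ρ gb : Matrix (Fin 2) (Fin 2) ℂ) = !![M, 0; r, M⁻¹]) (u : F2) :
    !![r,0;0,1] * (ρ (tilde u) : Matrix (Fin 2) (Fin 2) ℂ) * !![r⁻¹,0;0,1]
      = ((ρ u⁻¹ : Matrix (Fin 2) (Fin 2) ℂ))ᵀ := by
  have hDD : (!![r⁻¹,0;0,1] : Matrix (Fin 2) (Fin 2) ℂ) * !![r,0;0,1] = 1 := by
    rw [Matrix.mul_fin_two]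
    simp [inv_mul_cancel₀ hr, Matrix.one_fin_two]
  have hga : ((ρ ga⁻¹ : SL2C) : Matrix (Fin 2) (Fin 2) ℂ) = !![M⁻¹, -1; 0, M] := by
    rw [_root_.map_inv, Matrix.SpecialLinearGroup.coe_inv, ha, Matrix.adjugate_fin_two_of]; norm_num
  have hgb : ((ρ gb⁻¹ : SL2C) : Matrix (Fin 2) (Fin 2) ℂ) = !![M⁻¹, 0; -r, M] := by
    rw [_root_.map_inv, Matrix.SpecialLinearGroup.coe_inv, hb, Matrix.adjugate_fin_two_of]; norm_num
  have hP0 : !![r,0;0,1] * (ρ (tilde ga) : Matrix (Fin 2) (Fin 2) ℂ) * !![r⁻¹,0;0,1]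
      = ((ρ ga⁻¹ : Matrix (Fin 2) (Fin 2) ℂ))ᵀ := by
    have h1 : tilde ga = gb⁻¹ := by simp [tilde, ga]
    rw [h1, hgb, hga, Matrix.mul_fin_two, Matrix.mul_fin_two]
    ext i j
    fin_cases i <;> fin_cases j <;> simp <;> field_simp <;> ring
  have hP1 : !![r,0;0,1] * (ρ (tilde gb) : Matrix (Fin 2) (Fin 2) ℂ) * !![r⁻¹,0;0,1]
      = ((ρ gb⁻¹ : Matrix (Fin 2) (Fin 2) ℂ))ᵀ := by
    have h1 : tilde gb = ga⁻¹ := by simp [tilde, gb]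
    rw [h1, hga, hgb, Matrix.mul_fin_two, Matrix.mul_fin_two]
    ext i j
    fin_cases i <;> fin_cases j <;> simp <;> field_simp <;> ring
  have hQ0 : !![r,0;0,1] * (ρ (tilde ga⁻¹) : Matrix (Fin 2) (Fin 2) ℂ) * !![r⁻¹,0;0,1]
      = ((ρ ga⁻¹⁻¹ : Matrix (Fin 2) (Fin 2) ℂ))ᵀ := by
    have h1 : tilde ga⁻¹ = gb := by
      rw [_root_.map_inv, show tilde ga = gb⁻¹ by simp [tilde, ga], inv_inv]
    rw [h1, hb, inv_inv, ha, Matrix.mul_fin_two, Matrix.mul_fin_two]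
    ext i j
    fin_cases i <;> fin_cases j <;> simp [Matrix.transpose_apply] <;> field_simp
  have hQ1 : !![r,0;0,1] * (ρ (tilde gb⁻¹) : Matrix (Fin 2) (Fin 2) ℂ) * !![r⁻¹,0;0,1]
      = ((ρ gb⁻¹⁻¹ : Matrix (Fin 2) (Fin 2) ℂ))ᵀ := by
    have h1 : tilde gb⁻¹ = ga := by
      rw [_root_.map_inv, show tilde gb = ga⁻¹ by simp [tilde, gb], inv_inv]
    rw [h1, ha, inv_inv, hb, Matrix.mul_fin_two, Matrix.mul_fin_two]
    ext i j
    fin_cases i <;> fin_cases j <;> simp [Matrix.transpose_apply] <;> field_simp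
  induction u using FreeGroup.induction_on with
  | C1 =>
    rw [_root_.map_one, inv_one, _root_.map_one]
    simp only [Matrix.SpecialLinearGroup.coe_one, Matrix.mul_one, Matrix.transpose_one]
    rw [Matrix.mul_fin_two]
    simp [mul_inv_cancel₀ hr, Matrix.one_fin_two]
  | of x => fin_cases x
            · exact hP0
            · exact hP1
  | inv_of x _ => fin_cases x
                  · exact hQ0
                  · exact hQ1
  | mul x y hx hy =>
    rw [_root_.map_mul, _root_.map_mul, _root_.mul_inv_rev, _root_.map_mul]
    push_cast
    calc !![r,0;0,1] * ((ρ (tilde x) : Matrix (Fin 2) (Fin 2) ℂ) * (ρ (tilde y) : Matrix (Fin 2) (Fin 2) ℂ)) * !![r⁻¹,0;0,1]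
        = (!![r,0;0,1] * (ρ (tilde x) : Matrix (Fin 2) (Fin 2) ℂ) * !![r⁻¹,0;0,1]) *
          (!![r,0;0,1] * (ρ (tilde y) : Matrix (Fin 2) (Fin 2) ℂ) * !![r⁻¹,0;0,1]) := by
          rw [Matrix.mul_assoc, Matrix.mul_assoc, Matrix.mul_assoc, Matrix.mul_assoc]
          congr 2
          rw [← Matrix.mul_assoc, ← Matrix.mul_assoc, hDD, Matrix.one_mul]
      _ = ((ρ x⁻¹ : Matrix (Fin 2) (Fin 2) ℂ))ᵀ * ((ρ y⁻¹ : Matrix (Fin 2) (Fin 2) ℂ))ᵀ := by rw [hx, hy]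
      _ = ((ρ y⁻¹ : Matrix (Fin 2) (Fin 2) ℂ) * (ρ x⁻¹ : Matrix (Fin 2) (Fin 2) ℂ))ᵀ := by
          rw [Matrix.transpose_mul]

theorem stmt1 (M r : ℂ) (hM : M ≠ 0) (hr : r ≠ 0)
    (ρ : F2 →* SL2C)
    (ha : (ρ ga : Matrix (Fin 2) (Fin 2) ℂ) = !![M, 1; 0, M⁻¹])
    (hb : (ρ gb : Matrix (Fin 2) (Fin 2) ℂ) = !![M, 0; r, M⁻¹])
    (w : F2) (hw : w ≠ 1) (hwt : tilde w = w⁻¹) :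
    ρ w * ρ ga = ρ gb * ρ w ↔
      (ρ w : Matrix (Fin 2) (Fin 2) ℂ) 0 0
        - (M - M⁻¹) * (ρ w : Matrix (Fin 2) (Fin 2) ℂ) 0 1 = 0 := by
  obtain ⟨p, q, s, t, hPQ⟩ : ∃ p q s t, (ρ w : Matrix (Fin 2) (Fin 2) ℂ) = !![p, q; s, t] :=
    ⟨_, _, _, _, Matrix.eta_fin_two _⟩
  have h := key M r hM hr ρ ha hb w
  rw [hwt, _root_.map_inv, Matrix.SpecialLinearGroup.coe_inv, hPQ,
    Matrix.adjugate_fin_two_of, Matrix.mul_fin_two, Matrix.mul_fin_two] at h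
  rw [← Matrix.ext_iff] at h
  have hs : s = r * q := by
    have h01 := h 0 1
    norm_num at h01
    linear_combination -h01
  have hcoe : ρ w * ρ ga = ρ gb * ρ w ↔
      ((ρ w : Matrix (Fin 2) (Fin 2) ℂ) * (ρ ga : Matrix (Fin 2) (Fin 2) ℂ)
        = (ρ gb : Matrix (Fin 2) (Fin 2) ℂ) * (ρ w : Matrix (Fin 2) (Fin 2) ℂ)) := by
    refine Subtype.ext_iff.trans ?_
    simp
  rw [hcoe, ha, hb, hPQ, Matrix.mul_fin_two, Matrix.mul_fin_two, ← Matrix.ext_iff]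
  simp only [Fin.forall_fin_two]
  norm_num
  constructor
  · rintro ⟨⟨h1, h2⟩, h3⟩
    linear_combination h2
  · intro hp
    and_intros
    · ring
    · linear_combination hp
    · linear_combination (M - M⁻¹) * hs - r * hp
    · linear_combination hs
end

section
/- Let ρ : F → SL(2,ℂ) be any group homomorphism with tr ρ(a) = tr ρ(b). Then for every u ∈ F one has tr ρ(u) = tr ρ(ũ). -/
open Matrix

inductive FRel (x y z : ℂ) : FreeAlgebra ℂ (Fin 2) → FreeAlgebra ℂ (Fin 2) → Prop
  | aa : FRel x y z (FreeAlgebra.ι ℂ 0 * FreeAlgebra.ι ℂ 0) (x • FreeAlgebra.ι ℂ 0 - 1)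
  | bb : FRel x y z (FreeAlgebra.ι ℂ 1 * FreeAlgebra.ι ℂ 1) (y • FreeAlgebra.ι ℂ 1 - 1)
  | ab : FRel x y z (FreeAlgebra.ι ℂ 0 * FreeAlgebra.ι ℂ 1 + FreeAlgebra.ι ℂ 1 * FreeAlgebra.ι ℂ 0)
      (y • FreeAlgebra.ι ℂ 0 + x • FreeAlgebra.ι ℂ 1 + (z - x*y) • 1)

abbrev Alg (x y z : ℂ) := RingQuot (FRel x y z)

variable (x y z : ℂ)

def av : Alg x y z := RingQuot.mkAlgHom ℂ (FRel x y z) (FreeAlgebra.ι ℂ 0)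
def bv : Alg x y z := RingQuot.mkAlgHom ℂ (FRel x y z) (FreeAlgebra.ι ℂ 1)

lemma raa : av x y z * av x y z = x • av x y z - 1 := by
  have := RingQuot.mkAlgHom_rel ℂ (FRel.aa (x := x) (y := y) (z := z))
  simpa [av, _root_.map_mul, _root_.map_sub, _root_.map_smul, _root_.map_one] using this

lemma rbb : bv x y z * bv x y z = y • bv x y z - 1 := by
  have := RingQuot.mkAlgHom_rel ℂ (FRel.bb (x := x) (y := y) (z := z))
  simpa [bv, _root_.map_mul, _root_.map_sub, _root_.map_smul, _root_.map_one] using this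

lemma rab : av x y z * bv x y z + bv x y z * av x y z
    = y • av x y z + x • bv x y z + (z - x*y) • 1 := by
  have := RingQuot.mkAlgHom_rel ℂ (FRel.ab (x := x) (y := y) (z := z))
  simpa [av, bv, _root_.map_mul, _root_.map_add, _root_.map_smul, _root_.map_one] using this

def au : (Alg x y z)ˣ where
  val := av x y z
  inv := x • 1 - av x y z
  val_inv := by
    rw [mul_sub, mul_smul_comm, mul_one, raa, sub_sub_cancel]
  inv_val := by
    rw [sub_mul, smul_mul_assoc, one_mul, raa, sub_sub_cancel]

def bu : (Alg x y z)ˣ where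
  val := bv x y z
  inv := y • 1 - bv x y z
  val_inv := by rw [mul_sub, mul_smul_comm, mul_one, rbb, sub_sub_cancel]
  inv_val := by rw [sub_mul, smul_mul_assoc, one_mul, rbb, sub_sub_cancel]

def ψ : FreeGroup (Fin 2) →* (Alg x y z)ˣ := FreeGroup.lift ![au x y z, bu x y z]

local notation "M2" => Matrix (Fin 2) (Fin 2) ℂ

lemma sq_id (M : M2) : M * M = trace M • M - det M • 1 := by
  ext i j
  fin_cases i <;> fin_cases j <;>
    simp [Matrix.mul_apply, Matrix.trace_fin_two, Matrix.det_fin_two, Fin.sum_univ_two,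
      Matrix.one_apply] <;> ring

lemma polar (A B : M2) :
    A * B + B * A = trace B • A + trace A • B + (trace (A*B) - trace A * trace B) • 1 := by
  ext i j
  fin_cases i <;> fin_cases j <;>
    simp [Matrix.mul_apply, Matrix.trace_fin_two, Fin.sum_univ_two, Matrix.one_apply] <;> ring

def φm (A B : M2) (hA : det A = 1) (hB : det B = 1)
    (h1 : trace A = x) (h2 : trace B = y) (h3 : trace (A * B) = z) :
    Alg x y z →ₐ[ℂ] M2 :=
  RingQuot.liftAlgHom ℂ ⟨FreeAlgebra.lift ℂ ![A, B], by
    intro u v h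
    induction h with
    | aa => simp [_root_.map_mul, _root_.map_sub, _root_.map_smul, _root_.map_one,
        FreeAlgebra.lift_ι_apply, sq_id A, hA, h1]
    | bb => simp [_root_.map_mul, _root_.map_sub, _root_.map_smul, _root_.map_one,
        FreeAlgebra.lift_ι_apply, sq_id B, hB, h2]
    | ab =>
        simp only [_root_.map_mul, _root_.map_add, _root_.map_sub, _root_.map_smul,
          _root_.map_one, FreeAlgebra.lift_ι_apply, Matrix.cons_val_zero, Matrix.cons_val_one,
          Matrix.head_cons]
        rw [polar A B, h1, h2, h3]⟩

lemma φm_a (A B : M2) (hA hB h1 h2 h3) : φm x y z A B hA hB h1 h2 h3 (av x y z) = A := by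
  rw [av, φm, RingQuot.liftAlgHom_mkAlgHom_apply]
  simp [FreeAlgebra.lift_ι_apply]

lemma φm_b (A B : M2) (hA hB h1 h2 h3) : φm x y z A B hA hB h1 h2 h3 (bv x y z) = B := by
  rw [bv, φm, RingQuot.liftAlgHom_mkAlgHom_apply]
  simp [FreeAlgebra.lift_ι_apply]

def Tspan : Submodule ℂ (Alg x y z) :=
  Submodule.span ℂ {1, av x y z, bv x y z, av x y z * bv x y z}

lemma mem1 : (1 : Alg x y z) ∈ Tspan x y z := Submodule.subset_span (by simp)
lemma memA : av x y z ∈ Tspan x y z := Submodule.subset_span (by simp)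
lemma memB : bv x y z ∈ Tspan x y z := Submodule.subset_span (by simp)
lemma memAB : av x y z * bv x y z ∈ Tspan x y z := Submodule.subset_span (by simp)

lemma rba : bv x y z * av x y z
    = y • av x y z + x • bv x y z + (z - x*y) • 1 - av x y z * bv x y z :=
  eq_sub_of_add_eq' (rab x y z)

lemma aT : ∀ t ∈ Tspan x y z, av x y z * t ∈ Tspan x y z := by
  intro t ht
  induction ht using Submodule.span_induction with
  | mem g hg =>
    simp only [Set.mem_insert_iff, Set.mem_singleton_iff] at hg
    rcases hg with rfl | rfl | rfl | rfl
    · rw [mul_one]; exact memA x y z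
    · rw [raa]; exact sub_mem (Submodule.smul_mem _ _ (memA x y z)) (mem1 x y z)
    · exact memAB x y z
    · rw [← mul_assoc, raa, sub_mul, smul_mul_assoc, one_mul]
      exact sub_mem (Submodule.smul_mem _ _ (memAB x y z)) (memB x y z)
  | zero => rw [mul_zero]; exact zero_mem _
  | add u v _ _ ihu ihv => rw [mul_add]; exact add_mem ihu ihv
  | smul c u _ ihu => rw [mul_smul_comm]; exact Submodule.smul_mem _ _ ihu

lemma bT : ∀ t ∈ Tspan x y z, bv x y z * t ∈ Tspan x y z := by
  intro t ht
  induction ht using Submodule.span_induction with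
  | mem g hg =>
    simp only [Set.mem_insert_iff, Set.mem_singleton_iff] at hg
    rcases hg with rfl | rfl | rfl | rfl
    · rw [mul_one]; exact memB x y z
    · rw [rba]
      exact sub_mem (add_mem (add_mem (Submodule.smul_mem _ _ (memA x y z))
        (Submodule.smul_mem _ _ (memB x y z))) (Submodule.smul_mem _ _ (mem1 x y z)))
        (memAB x y z)
    · rw [rbb]; exact sub_mem (Submodule.smul_mem _ _ (memB x y z)) (mem1 x y z)
    · rw [← mul_assoc, rba, sub_mul, add_mul, add_mul, smul_mul_assoc, smul_mul_assoc,
        smul_mul_assoc, one_mul, mul_assoc, rbb, mul_sub, mul_smul_comm, mul_one]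
      refine sub_mem (add_mem (add_mem (Submodule.smul_mem _ _ (memAB x y z))
        (Submodule.smul_mem _ _ ?_)) (Submodule.smul_mem _ _ (memB x y z)))
        (sub_mem (Submodule.smul_mem _ _ (memAB x y z)) (memA x y z))
      exact sub_mem (Submodule.smul_mem _ _ (memB x y z)) (mem1 x y z)
  | zero => rw [mul_zero]; exact zero_mem _
  | add u v _ _ ihu ihv => rw [mul_add]; exact add_mem ihu ihv
  | smul c u _ ihu => rw [mul_smul_comm]; exact Submodule.smul_mem _ _ ihu

lemma mulT : ∀ s ∈ Tspan x y z, ∀ t ∈ Tspan x y z, s * t ∈ Tspan x y z := by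
  intro s hs
  induction hs using Submodule.span_induction with
  | mem g hg =>
    simp only [Set.mem_insert_iff, Set.mem_singleton_iff] at hg
    rcases hg with rfl | rfl | rfl | rfl
    · intro t ht; rw [one_mul]; exact ht
    · exact aT x y z
    · exact bT x y z
    · intro t ht; rw [mul_assoc]; exact aT x y z _ (bT x y z t ht)
  | zero => intro t ht; rw [zero_mul]; exact zero_mem _
  | add u v _ _ ihu ihv => intro t ht; rw [add_mul]; exact add_mem (ihu t ht) (ihv t ht)
  | smul c u _ ihu => intro t ht; rw [smul_mul_assoc]; exact Submodule.smul_mem _ _ (ihu t ht)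

lemma mem_top (ξ : Alg x y z) : ξ ∈ Tspan x y z := by
  obtain ⟨w, rfl⟩ := RingQuot.mkAlgHom_surjective ℂ (FRel x y z) ξ
  induction w using FreeAlgebra.induction with
  | grade0 r =>
    rw [AlgHom.commutes, Algebra.algebraMap_eq_smul_one]
    exact Submodule.smul_mem _ _ (mem1 x y z)
  | grade1 i =>
    fin_cases i
    · exact memA x y z
    · exact memB x y z
  | mul a b ha hb => rw [_root_.map_mul]; exact mulT x y z _ ha _ hb
  | add a b ha hb => rw [_root_.map_add]; exact add_mem ha hb

lemma trace_eq_of (A B A' B' : M2) (hA : det A = 1) (hB : det B = 1)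
    (hA' : det A' = 1) (hB' : det B' = 1)
    (t1 : trace A' = x) (t2 : trace B' = y) (t3 : trace (A' * B') = z)
    (s1 : trace A = x) (s2 : trace B = y) (s3 : trace (A * B) = z)
    (ξ : Alg x y z) :
    trace (φm x y z A B hA hB s1 s2 s3 ξ) = trace (φm x y z A' B' hA' hB' t1 t2 t3 ξ) := by
  have hξ := mem_top x y z ξ
  induction hξ using Submodule.span_induction with
  | mem g hg =>
    simp only [Set.mem_insert_iff, Set.mem_singleton_iff] at hg
    rcases hg with rfl | rfl | rfl | rfl
    · rw [_root_.map_one, _root_.map_one]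
    · rw [φm_a, φm_a, s1, t1]
    · rw [φm_b, φm_b, s2, t2]
    · rw [_root_.map_mul, _root_.map_mul, φm_a, φm_a, φm_b, φm_b, s3, t3]
  | zero => rw [_root_.map_zero, _root_.map_zero]
  | add u v _ _ ihu ihv => rw [_root_.map_add, _root_.map_add, trace_add, trace_add, ihu, ihv]
  | smul c u _ ihu => rw [_root_.map_smul, _root_.map_smul, trace_smul, trace_smul, ihu]


lemma key_s2 (σ : F2 →* SL2C) (hA : det ((σ (FreeGroup.of 0) : M2)) = 1)
    (hB : det ((σ (FreeGroup.of 1) : M2)) = 1)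
    (s1 : trace ((σ (FreeGroup.of 0) : M2)) = x) (s2 : trace ((σ (FreeGroup.of 1) : M2)) = y)
    (s3 : trace ((σ (FreeGroup.of 0) : M2) * (σ (FreeGroup.of 1) : M2)) = z)
    (u : F2) :
    (σ u : M2) = φm x y z _ _ hA hB s1 s2 s3 ((ψ x y z u : (Alg x y z)ˣ) : Alg x y z) := by
  induction u using FreeGroup.induction_on with
  | C1 =>
    rw [_root_.map_one, _root_.map_one, Matrix.SpecialLinearGroup.coe_one, Units.val_one,
      _root_.map_one]
  | of i =>
    fin_cases i
    · have h : ψ x y z (FreeGroup.of 0) = au x y z := by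
        rw [ψ, FreeGroup.lift_apply_of]; simp
      show (σ (FreeGroup.of 0) : M2)
          = φm x y z _ _ hA hB s1 s2 s3 ((ψ x y z (FreeGroup.of 0) : (Alg x y z)ˣ) : Alg x y z)
      rw [h]
      show _ = φm x y z _ _ hA hB s1 s2 s3 (av x y z)
      rw [φm_a]
    · have h : ψ x y z (FreeGroup.of 1) = bu x y z := by
        rw [ψ, FreeGroup.lift_apply_of]; simp
      show (σ (FreeGroup.of 1) : M2)
          = φm x y z _ _ hA hB s1 s2 s3 ((ψ x y z (FreeGroup.of 1) : (Alg x y z)ˣ) : Alg x y z)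
      rw [h]
      show _ = φm x y z _ _ hA hB s1 s2 s3 (bv x y z)
      rw [φm_b]
  | inv_of i ih =>
    rw [_root_.map_inv, _root_.map_inv]
    set g := σ (FreeGroup.of i) with hg
    set w := ψ x y z (FreeGroup.of i) with hw
    have h1 : (g : M2) * ((g⁻¹ : SL2C) : M2) = 1 := by
      rw [← Matrix.SpecialLinearGroup.coe_mul, mul_inv_cancel, Matrix.SpecialLinearGroup.coe_one]
    have h2 : (φm x y z _ _ hA hB s1 s2 s3 ((w⁻¹ : (Alg x y z)ˣ) : Alg x y z)) * (g : M2)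
        = 1 := by
      rw [ih, ← _root_.map_mul, ← Units.val_mul, inv_mul_cancel, Units.val_one, _root_.map_one]
    calc ((g⁻¹ : SL2C) : M2) = 1 * ((g⁻¹ : SL2C) : M2) := (one_mul _).symm
      _ = (φm x y z _ _ hA hB s1 s2 s3 ((w⁻¹ : (Alg x y z)ˣ) : Alg x y z))
            * ((g : M2) * ((g⁻¹ : SL2C) : M2)) := by rw [← h2, mul_assoc]
      _ = _ := by rw [h1, mul_one]
  | mul u v ihu ihv =>
    simp only [_root_.map_mul, Matrix.SpecialLinearGroup.coe_mul, Units.val_mul, ihu, ihv]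


lemma tr_inv (g : SL2C) : trace ((g⁻¹ : SL2C) : M2) = trace (g : M2) := by
  rw [Matrix.SpecialLinearGroup.coe_inv, Matrix.adjugate_fin_two]
  simp [Matrix.trace_fin_two]
  ring

lemma tga : tilde ga = gb⁻¹ := by
  rw [tilde, ga, FreeGroup.lift_apply_of]; simp

lemma tgb : tilde gb = ga⁻¹ := by
  rw [tilde, gb, FreeGroup.lift_apply_of]; simp

theorem stmt2 (ρ : F2 →* SL2C)
    (htr : Matrix.trace (ρ ga : Matrix (Fin 2) (Fin 2) ℂ)
         = Matrix.trace (ρ gb : Matrix (Fin 2) (Fin 2) ℂ)) :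
    ∀ u : F2, Matrix.trace (ρ u : Matrix (Fin 2) (Fin 2) ℂ)
      = Matrix.trace (ρ (tilde u) : Matrix (Fin 2) (Fin 2) ℂ) := by
  intro u
  have hA : det (ρ ga : M2) = 1 := (ρ ga).prop
  have hB : det (ρ gb : M2) = 1 := (ρ gb).prop
  set ρ' : F2 →* SL2C := ρ.comp tilde with hρ'
  have e0 : ρ' (FreeGroup.of 0) = (ρ gb)⁻¹ := by
    rw [hρ', MonoidHom.comp_apply, show (FreeGroup.of 0 : F2) = ga from rfl, tga, map_inv]
  have e1 : ρ' (FreeGroup.of 1) = (ρ ga)⁻¹ := by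
    rw [hρ', MonoidHom.comp_apply, show (FreeGroup.of 1 : F2) = gb from rfl, tgb, map_inv]
  have hA' : det (ρ' (FreeGroup.of 0) : M2) = 1 := (ρ' (FreeGroup.of 0)).prop
  have hB' : det (ρ' (FreeGroup.of 1) : M2) = 1 := (ρ' (FreeGroup.of 1)).prop
  have t1 : trace (ρ' (FreeGroup.of 0) : M2) = trace (ρ ga : M2) := by
    rw [e0, tr_inv, ← htr]
  have t2 : trace (ρ' (FreeGroup.of 1) : M2) = trace (ρ gb : M2) := by
    rw [e1, tr_inv, htr]
  have t3 : trace ((ρ' (FreeGroup.of 0) : M2) * (ρ' (FreeGroup.of 1) : M2))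
      = trace ((ρ ga : M2) * (ρ gb : M2)) := by
    rw [e0, e1, ← Matrix.SpecialLinearGroup.coe_mul, ← _root_.mul_inv_rev, tr_inv,
      Matrix.SpecialLinearGroup.coe_mul]
  have hru : ρ (tilde u) = ρ' u := rfl
  rw [hru,
    key_s2 (trace (ρ ga : M2)) (trace (ρ gb : M2)) (trace ((ρ ga : M2) * (ρ gb : M2)))
      ρ hA hB rfl rfl rfl u,
    key_s2 (trace (ρ ga : M2)) (trace (ρ gb : M2)) (trace ((ρ ga : M2) * (ρ gb : M2)))
      ρ' hA' hB' t1 t2 t3 u]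
  exact trace_eq_of _ _ _ _ _ _ _ hA hB hA' hB' t1 t2 t3 rfl rfl rfl _
end

section
/- Let s ∈ ℂ be a square root of r (so s² = r, s ≠ 0) and set C = [[0, −s⁻¹], [s, 0]]. Then C ∈ SL(2,ℂ), C·ρ(b) = ρ(a⁻¹)·C, C² = −I, and for every w ∈ F with w̃ = w⁻¹ one has ρ(bwa⁻¹w⁻¹) = −ρ(bw)·C·ρ(bw)·C; moreover tr(ρ(bw)·C) = s·M·w₁₂ − s⁻¹·(r·w₁₁ + M⁻¹·w₂₁). -/
open Matrix

theorem stmt7 (M r : ℂ) (hM : M ≠ 0) (hr : r ≠ 0)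
    (ρ : F2 →* SL2C)
    (ha : (ρ ga : Matrix (Fin 2) (Fin 2) ℂ) = !![M, 1; 0, M⁻¹])
    (hb : (ρ gb : Matrix (Fin 2) (Fin 2) ℂ) = !![M, 0; r, M⁻¹])
    (s : ℂ) (hs : s ^ 2 = r) (hs0 : s ≠ 0)
    (C : Matrix (Fin 2) (Fin 2) ℂ) (hC : C = !![0, -s⁻¹; s, 0]) :
    C.det = 1 ∧
    C * (ρ gb : Matrix (Fin 2) (Fin 2) ℂ) = (ρ ga⁻¹ : Matrix (Fin 2) (Fin 2) ℂ) * C ∧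
    C ^ 2 = -(1 : Matrix (Fin 2) (Fin 2) ℂ) ∧
    (∀ w : F2, tilde w = w⁻¹ →
      ((ρ (gb * w * ga⁻¹ * w⁻¹) : Matrix (Fin 2) (Fin 2) ℂ)
          = -((ρ (gb * w) : Matrix (Fin 2) (Fin 2) ℂ) * C
              * (ρ (gb * w) : Matrix (Fin 2) (Fin 2) ℂ) * C) ∧
        Matrix.trace ((ρ (gb * w) : Matrix (Fin 2) (Fin 2) ℂ) * C)
          = s * M * (ρ w : Matrix (Fin 2) (Fin 2) ℂ) 0 1
            - s⁻¹ * (r * (ρ w : Matrix (Fin 2) (Fin 2) ℂ) 0 0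
                      + M⁻¹ * (ρ w : Matrix (Fin 2) (Fin 2) ℂ) 1 0))) := by
  subst hs
  have hdet : C.det = 1 := by subst hC; simp [Matrix.det_fin_two_of]; field_simp
  set Cg : SL2C := ⟨C, hdet⟩ with hCgdef
  have hCg : (Cg : Matrix (Fin 2) (Fin 2) ℂ) = C := rfl
  have hCginv : ((Cg⁻¹ : SL2C) : Matrix (Fin 2) (Fin 2) ℂ) = -C := by
    rw [Matrix.SpecialLinearGroup.coe_inv, hCg, hC]
    ext i j
    fin_cases i <;> fin_cases j <;> simp [Matrix.adjugate_fin_two]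
  have hainv : (ρ ga⁻¹ : Matrix (Fin 2) (Fin 2) ℂ) = !![M⁻¹, -1; 0, M] := by
    rw [map_inv, Matrix.SpecialLinearGroup.coe_inv, ha]
    ext i j
    fin_cases i <;> fin_cases j <;> simp [Matrix.adjugate_fin_two]
  have hbinv : (ρ gb⁻¹ : Matrix (Fin 2) (Fin 2) ℂ) = !![M⁻¹, 0; -s^2, M] := by
    rw [map_inv, Matrix.SpecialLinearGroup.coe_inv, hb]
    ext i j
    fin_cases i <;> fin_cases j <;> simp [Matrix.adjugate_fin_two]
  have hconjA : ρ ga⁻¹ = Cg * ρ gb * Cg⁻¹ := by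
    apply Subtype.ext
    rw [Matrix.SpecialLinearGroup.coe_mul, Matrix.SpecialLinearGroup.coe_mul,
      hainv, hCg, hCginv, hb, hC]
    ext i j
    fin_cases i <;> fin_cases j <;>
      · simp [Matrix.mul_apply, Fin.sum_univ_two]
        try field_simp
        try ring
  have hconjB : ρ gb⁻¹ = Cg * ρ ga * Cg⁻¹ := by
    apply Subtype.ext
    rw [Matrix.SpecialLinearGroup.coe_mul, Matrix.SpecialLinearGroup.coe_mul,
      hbinv, hCg, hCginv, ha, hC]
    ext i j
    fin_cases i <;> fin_cases j <;>
      · simp [Matrix.mul_apply, Fin.sum_univ_two]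
        try field_simp
        try ring
  have htA : tilde ga = gb⁻¹ := by simp [tilde, ga]
  have htB : tilde gb = ga⁻¹ := by simp [tilde, gb]
  have key : ∀ u : F2, ρ (tilde u) = Cg * ρ u * Cg⁻¹ := by
    intro u
    induction u using FreeGroup.induction_on with
    | C1 => simp
    | of x =>
      fin_cases x
      · show ρ (tilde ga) = Cg * ρ ga * Cg⁻¹
        rw [htA, hconjB]
      · show ρ (tilde gb) = Cg * ρ gb * Cg⁻¹
        rw [htB, hconjA]
    | inv_of x ih =>
      simp only [map_inv, ih, _root_.mul_inv_rev, inv_inv, mul_assoc]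
    | mul x y ihx ihy =>
      simp only [_root_.map_mul, ihx, ihy]
      group
  refine ⟨hdet, ?_, ?_, ?_⟩
  · rw [hb, hainv, hC]
    ext i j
    fin_cases i <;> fin_cases j <;>
      · simp [Matrix.mul_apply, Fin.sum_univ_two]
        try field_simp
        try ring
  · rw [hC, pow_two]
    ext i j
    fin_cases i <;> fin_cases j <;>
      · simp [Matrix.mul_apply, Fin.sum_univ_two]
        try field_simp
        try ring
  · intro w hw
    have hw' : ρ w⁻¹ = Cg * ρ w * Cg⁻¹ := by rw [← hw]; exact key w
    have e : ρ (gb * w * ga⁻¹ * w⁻¹) = ρ (gb * w) * Cg * ρ (gb * w) * Cg⁻¹ := by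
      simp only [_root_.map_mul, hconjA, hw']
      group
    constructor
    · rw [e, Matrix.SpecialLinearGroup.coe_mul, Matrix.SpecialLinearGroup.coe_mul,
        Matrix.SpecialLinearGroup.coe_mul, hCg, hCginv, Matrix.mul_neg]
    · have hbw : (ρ (gb * w) : Matrix (Fin 2) (Fin 2) ℂ)
          = (ρ gb : Matrix (Fin 2) (Fin 2) ℂ) * (ρ w : Matrix (Fin 2) (Fin 2) ℂ) := by
        rw [_root_.map_mul, Matrix.SpecialLinearGroup.coe_mul]
      rw [hbw, hb, hC, Matrix.trace_fin_two]
      simp [Matrix.mul_apply, Matrix.vecMul, dotProduct, Fin.sum_univ_two]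
      field_simp
      ring
end

section
/- Let w ∈ F satisfy w ≠ 1 and w̃ = w⁻¹. Then ρ(w)ρ(a) = ρ(b)ρ(w) if and only if w₁₁ − (M·w₁₂ − M⁻¹r⁻¹·w₂₁) = 0 (this expression is the Lê/Mednykh polynomial condition, and it coincides with the Riley polynomial condition w₁₁ − (M − M⁻¹)w₁₂ = 0 since w₂₁ = r·w₁₂). -/
open Matrix

lemma transpose_fin_two_of' (a b c d : ℂ) :
    (!![a, b; c, d])ᵀ = !![a, c; b, d] := by
  ext i j; fin_cases i <;> fin_cases j <;> rfl

set_option maxHeartbeats 1000000 in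
theorem stmt8 (M r : ℂ) (hM : M ≠ 0) (hr : r ≠ 0)
    (ρ : F2 →* SL2C)
    (ha : (ρ ga : Matrix (Fin 2) (Fin 2) ℂ) = !![M, 1; 0, M⁻¹])
    (hb : (ρ gb : Matrix (Fin 2) (Fin 2) ℂ) = !![M, 0; r, M⁻¹])
    (w : F2) (hw : w ≠ 1) (hwt : tilde w = w⁻¹) :
    (ρ w * ρ ga = ρ gb * ρ w ↔
      (ρ w : Matrix (Fin 2) (Fin 2) ℂ) 0 0
        - (M * (ρ w : Matrix (Fin 2) (Fin 2) ℂ) 0 1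
            - M⁻¹ * r⁻¹ * (ρ w : Matrix (Fin 2) (Fin 2) ℂ) 1 0) = 0) ∧
    (ρ w : Matrix (Fin 2) (Fin 2) ℂ) 1 0 = r * (ρ w : Matrix (Fin 2) (Fin 2) ℂ) 0 1 ∧
    (ρ w : Matrix (Fin 2) (Fin 2) ℂ) 0 0
        - (M * (ρ w : Matrix (Fin 2) (Fin 2) ℂ) 0 1
            - M⁻¹ * r⁻¹ * (ρ w : Matrix (Fin 2) (Fin 2) ℂ) 1 0)
      = (ρ w : Matrix (Fin 2) (Fin 2) ℂ) 0 0
          - (M - M⁻¹) * (ρ w : Matrix (Fin 2) (Fin 2) ℂ) 0 1 := by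
  set Dm : Matrix (Fin 2) (Fin 2) ℂ := !![r⁻¹, 0; 0, 1] with hDm
  -- coe of inverses of the generators
  have hainv : ((ρ ga⁻¹ : SL2C) : Matrix (Fin 2) (Fin 2) ℂ) = !![M⁻¹, -1; 0, M] := by
    rw [map_inv, Matrix.SpecialLinearGroup.coe_inv, ha, Matrix.adjugate_fin_two_of]
    norm_num
  have hbinv : ((ρ gb⁻¹ : SL2C) : Matrix (Fin 2) (Fin 2) ℂ) = !![M⁻¹, 0; -r, M] := by
    rw [map_inv, Matrix.SpecialLinearGroup.coe_inv, hb, Matrix.adjugate_fin_two_of]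
    norm_num
  -- the inverse step
  have hstep : ∀ A B : SL2C,
      ((A : Matrix (Fin 2) (Fin 2) ℂ) * Dm * (B : Matrix (Fin 2) (Fin 2) ℂ)ᵀ = Dm) →
      ((A⁻¹ : SL2C) : Matrix (Fin 2) (Fin 2) ℂ) * Dm
        * ((B⁻¹ : SL2C) : Matrix (Fin 2) (Fin 2) ℂ)ᵀ = Dm := by
    intro A B h
    have h2 : ((A⁻¹ : SL2C) : Matrix (Fin 2) (Fin 2) ℂ)
        * ((A : Matrix (Fin 2) (Fin 2) ℂ) * Dm * (B : Matrix (Fin 2) (Fin 2) ℂ)ᵀ)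
        * ((B⁻¹ : SL2C) : Matrix (Fin 2) (Fin 2) ℂ)ᵀ
        = ((A⁻¹ : SL2C) : Matrix (Fin 2) (Fin 2) ℂ) * Dm
          * ((B⁻¹ : SL2C) : Matrix (Fin 2) (Fin 2) ℂ)ᵀ := by rw [h]
    rw [← h2]
    have hA : ((A⁻¹ : SL2C) : Matrix (Fin 2) (Fin 2) ℂ) * (A : Matrix (Fin 2) (Fin 2) ℂ)
        = 1 := by
      rw [← Matrix.SpecialLinearGroup.coe_mul, inv_mul_cancel,
        Matrix.SpecialLinearGroup.coe_one]
    have hB : (B : Matrix (Fin 2) (Fin 2) ℂ)ᵀ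
        * ((B⁻¹ : SL2C) : Matrix (Fin 2) (Fin 2) ℂ)ᵀ = 1 := by
      rw [← Matrix.transpose_mul, ← Matrix.SpecialLinearGroup.coe_mul, inv_mul_cancel,
        Matrix.SpecialLinearGroup.coe_one, Matrix.transpose_one]
    calc ((A⁻¹ : SL2C) : Matrix (Fin 2) (Fin 2) ℂ)
          * ((A : Matrix (Fin 2) (Fin 2) ℂ) * Dm * (B : Matrix (Fin 2) (Fin 2) ℂ)ᵀ)
          * ((B⁻¹ : SL2C) : Matrix (Fin 2) (Fin 2) ℂ)ᵀ
        = (((A⁻¹ : SL2C) : Matrix (Fin 2) (Fin 2) ℂ) * (A : Matrix (Fin 2) (Fin 2) ℂ))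
          * Dm * ((B : Matrix (Fin 2) (Fin 2) ℂ)ᵀ
            * ((B⁻¹ : SL2C) : Matrix (Fin 2) (Fin 2) ℂ)ᵀ) := by
          simp only [mul_assoc]
      _ = Dm := by rw [hA, hB]; simp
  have ht0 : tilde ga = gb⁻¹ := by simp [tilde, ga]
  have ht1 : tilde gb = ga⁻¹ := by simp [tilde, gb]
  -- the key palindrome identity
  have hQ : ∀ u : F2, ((ρ (tilde u) : SL2C) : Matrix (Fin 2) (Fin 2) ℂ) * Dm
      * ((ρ u : SL2C) : Matrix (Fin 2) (Fin 2) ℂ)ᵀ = Dm := by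
    intro u
    induction u using FreeGroup.induction_on with
    | C1 => simp
    | of i =>
      fin_cases i
      · show ((ρ (tilde ga) : SL2C) : Matrix (Fin 2) (Fin 2) ℂ) * Dm
          * ((ρ ga : SL2C) : Matrix (Fin 2) (Fin 2) ℂ)ᵀ = Dm
        rw [ht0, hbinv, ha, hDm, transpose_fin_two_of']
        ext i j
        fin_cases i <;> fin_cases j <;>
          simp [Matrix.mul_apply, Fin.sum_univ_two, Matrix.transpose_apply] <;> field_simp <;> ring
      · show ((ρ (tilde gb) : SL2C) : Matrix (Fin 2) (Fin 2) ℂ) * Dm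
          * ((ρ gb : SL2C) : Matrix (Fin 2) (Fin 2) ℂ)ᵀ = Dm
        rw [ht1, hainv, hb, hDm, transpose_fin_two_of']
        ext i j
        fin_cases i <;> fin_cases j <;>
          simp [Matrix.mul_apply, Fin.sum_univ_two, Matrix.transpose_apply] <;> field_simp <;> ring
    | inv_of i h =>
      simp only [map_inv]
      exact hstep _ _ h
    | mul x y hx hy =>
      rw [show tilde (x * y) = tilde x * tilde y from map_mul _ _ _,
        show ρ (tilde x * tilde y) = ρ (tilde x) * ρ (tilde y) from map_mul _ _ _,
        show ρ (x * y) = ρ x * ρ y from map_mul _ _ _, Matrix.SpecialLinearGroup.coe_mul,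
        Matrix.SpecialLinearGroup.coe_mul, Matrix.transpose_mul]
      calc ((ρ (tilde x) : SL2C) : Matrix (Fin 2) (Fin 2) ℂ)
            * ((ρ (tilde y) : SL2C) : Matrix (Fin 2) (Fin 2) ℂ) * Dm
            * (((ρ y : SL2C) : Matrix (Fin 2) (Fin 2) ℂ)ᵀ
              * ((ρ x : SL2C) : Matrix (Fin 2) (Fin 2) ℂ)ᵀ)
          = ((ρ (tilde x) : SL2C) : Matrix (Fin 2) (Fin 2) ℂ)
            * (((ρ (tilde y) : SL2C) : Matrix (Fin 2) (Fin 2) ℂ) * Dm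
              * ((ρ y : SL2C) : Matrix (Fin 2) (Fin 2) ℂ)ᵀ)
            * ((ρ x : SL2C) : Matrix (Fin 2) (Fin 2) ℂ)ᵀ := by simp only [mul_assoc]
        _ = Dm := by rw [hy]; exact hx
  -- derive w21 = r * w12
  have hwQ := hQ w
  rw [hwt] at hwQ
  set W : Matrix (Fin 2) (Fin 2) ℂ := ((ρ w : SL2C) : Matrix (Fin 2) (Fin 2) ℂ) with hW
  have hWinv : ((ρ w⁻¹ : SL2C) : Matrix (Fin 2) (Fin 2) ℂ)
      = !![W 1 1, -W 0 1; -W 1 0, W 0 0] := by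
    rw [map_inv, Matrix.SpecialLinearGroup.coe_inv, ← hW, Matrix.adjugate_fin_two]
  rw [hWinv] at hwQ
  have hdet : W 0 0 * W 1 1 - W 0 1 * W 1 0 = 1 := by
    have := (ρ w).2
    rw [← hW, Matrix.det_fin_two] at this
    linear_combination this
  have e00 := congrFun (congrFun hwQ 0) 0
  have e01 := congrFun (congrFun hwQ 0) 1
  have e10 := congrFun (congrFun hwQ 1) 0
  have e11 := congrFun (congrFun hwQ 1) 1
  simp [hDm, Matrix.mul_apply, Fin.sum_univ_two, Matrix.transpose_apply] at e00 e01 e10 e11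
  field_simp at e00 e01 e10 e11
  have h10 : W 1 0 = r * W 0 1 := by
    by_cases hs : W 1 0 - r * W 0 1 = 0
    · linear_combination hs
    · exfalso
      have ht : W 1 1 * (W 1 0 - r * W 0 1) = 0 := by linear_combination e01
      have hp : W 0 0 * (W 1 0 - r * W 0 1) = 0 := by linear_combination -e10
      have hq : W 0 1 * (W 1 0 - r * W 0 1) = 0 := by linear_combination e00 - hdet
      have hss : W 1 0 * (W 1 0 - r * W 0 1) = 0 := by linear_combination r * hdet - e11
      have z1 := (mul_eq_zero.mp ht).resolve_right hs
      have z2 := (mul_eq_zero.mp hp).resolve_right hs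
      have z3 := (mul_eq_zero.mp hq).resolve_right hs
      have z4 := (mul_eq_zero.mp hss).resolve_right hs
      rw [z1, z2, z3, z4] at hdet
      simp at hdet
  refine ⟨?_, h10, ?_⟩
  · constructor
    · intro h
      have h' : W * ((ρ ga : SL2C) : Matrix (Fin 2) (Fin 2) ℂ)
          = ((ρ gb : SL2C) : Matrix (Fin 2) (Fin 2) ℂ) * W := by
        rw [hW, ← Matrix.SpecialLinearGroup.coe_mul, ← Matrix.SpecialLinearGroup.coe_mul, h]
      rw [ha, hb] at h'
      have h01 := congrFun (congrFun h' 0) 1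
      simp [Matrix.mul_apply, Fin.sum_univ_two] at h01
      have hfact : M⁻¹ * r⁻¹ * W 1 0 = M⁻¹ * W 0 1 := by
        rw [h10]; field_simp
      rw [hfact]
      linear_combination h01
    · intro h
      have key : W * ((ρ ga : SL2C) : Matrix (Fin 2) (Fin 2) ℂ)
          = ((ρ gb : SL2C) : Matrix (Fin 2) (Fin 2) ℂ) * W := by
        rw [ha, hb]
        have hfact : M⁻¹ * r⁻¹ * W 1 0 = M⁻¹ * W 0 1 := by
          rw [h10]; field_simp
        rw [hfact] at h
        have hq : W 0 0 = M * W 0 1 - M⁻¹ * W 0 1 := by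
          linear_combination h
        ext i j
        fin_cases i <;> fin_cases j <;>
            simp [Matrix.mul_apply, Fin.sum_univ_two, h10, hq] <;> field_simp <;> ring
      have : ((ρ w * ρ ga : SL2C) : Matrix (Fin 2) (Fin 2) ℂ)
          = ((ρ gb * ρ w : SL2C) : Matrix (Fin 2) (Fin 2) ℂ) := by
        rw [Matrix.SpecialLinearGroup.coe_mul, Matrix.SpecialLinearGroup.coe_mul]
        exact key
      exact Subtype.ext this
  · have hfact : M⁻¹ * r⁻¹ * W 1 0 = M⁻¹ * W 0 1 := by
      rw [h10]; field_simp
    rw [hfact]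
    ring
end

section
/- Let m ≥ 0 be an integer and let w = (ba⁻¹)^m·b·a·(b⁻¹a)^m in F. Then ρ(w) = [[w₁₁, w₁₂], [(2−z)w₁₂, w₂₂]] where (writing S_j for S_j(z)): w₁₁ = M²S_m² − 2M²S_mS_{m−1} + (2 + M² − z)S_{m−1}², w₁₂ = (S_m − S_{m−1})(M·S_m − M⁻¹·S_{m−1}), and w₂₂ = (M⁻² + 2 − z)S_m² − 2M⁻²S_mS_{m−1} + M⁻²S_{m−1}². -/
open Matrix

lemma pow_cheb (S : ℤ → ℂ → ℂ) (z : ℂ)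
    (hSm1 : S (-1) z = 0) (hSm2 : S (-2) z = -1)
    (hSrec : ∀ j : ℤ, S j z = z * S (j - 1) z - S (j - 2) z)
    (C : Matrix (Fin 2) (Fin 2) ℂ) (hC2 : C * C = z • C - 1) :
    ∀ k : ℕ, C ^ k = S ((k : ℤ) - 1) z • C - S ((k : ℤ) - 2) z • 1 := by
  intro k
  induction k with
  | zero => simp [hSm1, hSm2]
  | succ k ih =>
    have h1 : ((k + 1 : ℕ) : ℤ) - 1 = (k : ℤ) := by push_cast; ring
    have h2 : ((k + 1 : ℕ) : ℤ) - 2 = (k : ℤ) - 1 := by push_cast; ring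
    rw [pow_succ, ih, h1, h2, hSrec k]
    rw [sub_mul, smul_mul_assoc, smul_mul_assoc, one_mul, hC2, smul_sub, smul_smul, sub_smul]
    module

set_option maxHeartbeats 1000000 in
lemma final_prod (M z s u : ℂ) (hM : M ≠ 0) :
    !![s - (z * s - u), -M * s; (2 - z) * M⁻¹ * s, (z - 1) * s - (z * s - u)] *
      !![M ^ 2, M; (2 - z) * M, 2 - z + M⁻¹ ^ 2] *
      !![s - (z * s - u), M⁻¹ * s; (z - 2) * M * s, (z - 1) * s - (z * s - u)]
    = !![M ^ 2 * u ^ 2 - 2 * M ^ 2 * u * s + (2 + M ^ 2 - z) * s ^ 2,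
         (u - s) * (M * u - M⁻¹ * s);
         (2 - z) * ((u - s) * (M * u - M⁻¹ * s)),
         (M⁻¹ ^ 2 + 2 - z) * u ^ 2 - 2 * M⁻¹ ^ 2 * u * s + M⁻¹ ^ 2 * s ^ 2] := by
  rw [Matrix.mul_fin_two, Matrix.mul_fin_two]
  ext i j
  fin_cases i <;> fin_cases j <;>
    simp only [Matrix.cons_val', Matrix.cons_val_zero, Matrix.cons_val_one, Matrix.head_cons,
      Matrix.head_fin_const, Matrix.empty_val', Matrix.cons_val_fin_one, Matrix.of_apply,
      Fin.isValue, Fin.mk_zero, Fin.mk_one]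
  all_goals field_simp
  all_goals ring

theorem stmt12
    (M z : ℂ) (hM : M ≠ 0)
    (S : ℤ → ℂ → ℂ)
    (hS0 : ∀ x : ℂ, S 0 x = 1) (hS1 : ∀ x : ℂ, S 1 x = x)
    (hSrec : ∀ (j : ℤ) (x : ℂ), S j x = x * S (j - 1) x - S (j - 2) x)
    (ρ : F2 →* SL2C)
    (ha : (ρ ga : Matrix (Fin 2) (Fin 2) ℂ) = !![M, 1; 0, M⁻¹])
    (hb : (ρ gb : Matrix (Fin 2) (Fin 2) ℂ) = !![M, 0; 2 - z, M⁻¹])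
    (m : ℤ) (hm : 0 ≤ m)
    (w : F2) (hw : w = (gb * ga⁻¹) ^ m * gb * ga * (gb⁻¹ * ga) ^ m) :
    (ρ w : Matrix (Fin 2) (Fin 2) ℂ)
      = !![M ^ 2 * S m z ^ 2 - 2 * M ^ 2 * S m z * S (m - 1) z
              + (2 + M ^ 2 - z) * S (m - 1) z ^ 2,
           (S m z - S (m - 1) z) * (M * S m z - M⁻¹ * S (m - 1) z);
           (2 - z) * ((S m z - S (m - 1) z) * (M * S m z - M⁻¹ * S (m - 1) z)),
           (M⁻¹ ^ 2 + 2 - z) * S m z ^ 2 - 2 * M⁻¹ ^ 2 * S m z * S (m - 1) z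
              + M⁻¹ ^ 2 * S (m - 1) z ^ 2] := by
  obtain ⟨n, rfl⟩ := Int.eq_ofNat_of_zero_le hm
  subst hw
  have hMi : M * M⁻¹ = 1 := mul_inv_cancel₀ hM
  have hSm1 : S (-1) z = 0 := by
    have h := hSrec 1 z
    have e1 : (1 : ℤ) - 1 = 0 := by norm_num
    have e2 : (1 : ℤ) - 2 = -1 := by norm_num
    rw [e1, e2, hS1, hS0] at h
    linear_combination h
  have hSm2 : S (-2) z = -1 := by
    have h := hSrec 0 z
    have e1 : (0 : ℤ) - 1 = -1 := by norm_num
    have e2 : (0 : ℤ) - 2 = -2 := by norm_num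
    rw [e1, e2, hS0, hSm1] at h
    linear_combination h
  have hainv : (ρ ga⁻¹ : Matrix (Fin 2) (Fin 2) ℂ) = !![M⁻¹, -1; 0, M] := by
    rw [_root_.map_inv, Matrix.SpecialLinearGroup.coe_inv, ha, Matrix.adjugate_fin_two_of]
    norm_num
  have hbinv : (ρ gb⁻¹ : Matrix (Fin 2) (Fin 2) ℂ) = !![M⁻¹, 0; z - 2, M] := by
    rw [_root_.map_inv, Matrix.SpecialLinearGroup.coe_inv, hb, Matrix.adjugate_fin_two_of]
    ext i j
    fin_cases i <;> fin_cases j <;> simp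
    all_goals try ring
  set C : Matrix (Fin 2) (Fin 2) ℂ := !![1, -M; (2 - z) * M⁻¹, z - 1] with hCdef
  set D : Matrix (Fin 2) (Fin 2) ℂ := !![1, M⁻¹; (z - 2) * M, z - 1] with hDdef
  have hC : (ρ (gb * ga⁻¹) : Matrix (Fin 2) (Fin 2) ℂ) = C := by
    rw [_root_.map_mul, Matrix.SpecialLinearGroup.coe_mul, hb, hainv, hCdef,
      Matrix.mul_fin_two]
    ext i j
    fin_cases i <;> fin_cases j <;> simp
    all_goals try field_simp
    all_goals try ring
  have hD : (ρ (gb⁻¹ * ga) : Matrix (Fin 2) (Fin 2) ℂ) = D := by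
    rw [_root_.map_mul, Matrix.SpecialLinearGroup.coe_mul, hbinv, ha, hDdef,
      Matrix.mul_fin_two]
    ext i j
    fin_cases i <;> fin_cases j <;> simp
    all_goals try field_simp
    all_goals try ring
  have hC2 : C * C = z • C - 1 := by
    rw [hCdef, Matrix.mul_fin_two]
    ext i j
    fin_cases i <;> fin_cases j <;> simp [Matrix.one_apply]
    all_goals try field_simp
    all_goals try ring
  have hD2 : D * D = z • D - 1 := by
    rw [hDdef, Matrix.mul_fin_two]
    ext i j
    fin_cases i <;> fin_cases j <;> simp [Matrix.one_apply]
    all_goals try field_simp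
    all_goals try ring
  have key : (ρ ((gb * ga⁻¹) ^ (n : ℤ) * gb * ga * (gb⁻¹ * ga) ^ (n : ℤ)) :
      Matrix (Fin 2) (Fin 2) ℂ)
      = (S ((n : ℤ) - 1) z • C - S ((n : ℤ) - 2) z • 1) *
        (!![M, 0; 2 - z, M⁻¹] * !![M, 1; 0, M⁻¹]) *
        (S ((n : ℤ) - 1) z • D - S ((n : ℤ) - 2) z • 1) := by
    rw [zpow_natCast, zpow_natCast, _root_.map_mul, _root_.map_mul, _root_.map_mul,
      _root_.map_pow, _root_.map_pow]
    simp only [Matrix.SpecialLinearGroup.coe_mul, Matrix.SpecialLinearGroup.coe_pow]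
    rw [hC, hD, ha, hb,
      pow_cheb S z hSm1 hSm2 (fun j => hSrec j z) C hC2 n,
      pow_cheb S z hSm1 hSm2 (fun j => hSrec j z) D hD2 n]
    simp only [mul_assoc]
  rw [key]
  have hrec : S ((n : ℤ) - 2) z = z * S ((n : ℤ) - 1) z - S (n : ℤ) z := by
    linear_combination hSrec (n : ℤ) z
  rw [hrec]
  set s := S ((n : ℤ) - 1) z with hs
  set u := S (n : ℤ) z with hu
  have hE : !![M, 0; 2 - z, M⁻¹] * !![M, 1; 0, M⁻¹]
      = !![M ^ 2, M; (2 - z) * M, 2 - z + M⁻¹ ^ 2] := by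
    rw [Matrix.mul_fin_two]
    congr 1 <;> try ring
    all_goals field_simp
    all_goals ring
  have hP : s • C - (z * s - u) • (1 : Matrix (Fin 2) (Fin 2) ℂ)
      = !![s - (z * s - u), -M * s; (2 - z) * M⁻¹ * s, (z - 1) * s - (z * s - u)] := by
    rw [hCdef]
    ext i j
    fin_cases i <;> fin_cases j <;> simp [Matrix.one_apply]
    all_goals try ring
  have hQ : s • D - (z * s - u) • (1 : Matrix (Fin 2) (Fin 2) ℂ)
      = !![s - (z * s - u), M⁻¹ * s; (z - 2) * M * s, (z - 1) * s - (z * s - u)] := by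
    rw [hDdef]
    ext i j
    fin_cases i <;> fin_cases j <;> simp [Matrix.one_apply]
    all_goals try ring
  rw [hP, hQ, hE, final_prod M z s u hM]
end

section
/- Let m ≥ 0 and n be integers and let w = (ba⁻¹)^m·b·a·(b⁻¹a)^m in F. Set t_m = (M² + M⁻² + 2 − z) − (z − 2)(z − M² − M⁻²)·S_m(z)·S_{m−1}(z) and d_m = 1 − (z − M² − M⁻²)·S_m(z)·(S_m(z) − S_{m−1}(z)). Then, writing ρ(wⁿ) = [[W₁₁, W₁₂], [W₂₁, W₂₂]], one has W₁₁ − (M − M⁻¹)W₁₂ = S_n(t_m) − d_m·S_{n−1}(t_m); moreover, if n ≠ 0, then ρ(wⁿ)ρ(a) = ρ(b)ρ(wⁿ) if and only if S_n(t_m) − d_m·S_{n−1}(t_m) = 0 (this is the Riley polynomial Φ_{J(2m+1,2n)}(M,z) of the double twist knot J(2m+1,2n)). -/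
open Matrix

lemma sl2_cayley (X : SL2C) :
    (X : Matrix (Fin 2) (Fin 2) ℂ) * (X : Matrix (Fin 2) (Fin 2) ℂ)
      = (X : Matrix (Fin 2) (Fin 2) ℂ).trace • (X : Matrix (Fin 2) (Fin 2) ℂ) - 1 := by
  have hdet : ((X : Matrix (Fin 2) (Fin 2) ℂ)).det = 1 := X.2
  rw [Matrix.det_fin_two] at hdet
  rw [← Matrix.ext_iff]
  simp only [Fin.forall_fin_two, Matrix.mul_apply, Fin.sum_univ_two, Matrix.trace_fin_two,
    Matrix.smul_apply, Matrix.sub_apply, Matrix.one_apply, smul_eq_mul]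
  norm_num
  refine ⟨⟨?_, ?_⟩, ?_, ?_⟩ <;> first | ring1 | linear_combination -hdet

lemma sl2_inv (X : SL2C) :
    ((X⁻¹ : SL2C) : Matrix (Fin 2) (Fin 2) ℂ)
      = (X : Matrix (Fin 2) (Fin 2) ℂ).trace • (1 : Matrix (Fin 2) (Fin 2) ℂ)
        - (X : Matrix (Fin 2) (Fin 2) ℂ) := by
  rw [Matrix.SpecialLinearGroup.coe_inv]
  rw [← Matrix.ext_iff]
  simp only [Fin.forall_fin_two, Matrix.adjugate_fin_two, Matrix.trace_fin_two,
    Matrix.smul_apply, Matrix.sub_apply, Matrix.one_apply, smul_eq_mul,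
    Matrix.cons_val_zero, Matrix.cons_val_one, Matrix.head_cons, Matrix.of_apply,
    Matrix.cons_val', Matrix.empty_val', Matrix.cons_val_fin_one, Matrix.head_fin_const]
  norm_num

lemma sl2_zpow (S : ℤ → ℂ → ℂ)
    (hS0 : ∀ x : ℂ, S 0 x = 1) (hS1 : ∀ x : ℂ, S 1 x = x)
    (hSrec : ∀ (j : ℤ) (x : ℂ), S j x = x * S (j - 1) x - S (j - 2) x)
    (X : SL2C) (t : ℂ) (ht : (X : Matrix (Fin 2) (Fin 2) ℂ).trace = t) (n : ℤ) :
    ((X ^ n : SL2C) : Matrix (Fin 2) (Fin 2) ℂ)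
      = S (n - 1) t • (X : Matrix (Fin 2) (Fin 2) ℂ) - S (n - 2) t • 1 := by
  have hneg1 : S (-1) t = 0 := by
    have h := hSrec 1 t
    norm_num at h
    rw [hS0, hS1] at h
    linear_combination h
  have hneg2 : S (-2) t = -1 := by
    have h := hSrec 0 t
    norm_num at h
    rw [hS0, hneg1] at h
    linear_combination h
  have hCH := sl2_cayley X
  rw [ht] at hCH
  induction n using Int.induction_on with
  | zero =>
    have e1 : (0:ℤ) - 1 = -1 := by ring
    have e2 : (0:ℤ) - 2 = -2 := by ring
    rw [zpow_zero, e1, e2, hneg1, hneg2, Matrix.SpecialLinearGroup.coe_one]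
    simp
  | succ k ih =>
    have e1 : (k : ℤ) + 1 - 1 = k := by ring
    have e2 : (k : ℤ) + 1 - 2 = (k : ℤ) - 1 := by ring
    rw [e1, e2, _root_.zpow_add_one, Matrix.SpecialLinearGroup.coe_mul, ih]
    simp only [sub_mul, smul_mul_assoc, one_mul, hCH]
    rw [hSrec k t]
    match_scalars <;> ring
  | pred k ih =>
    have e1 : -(k : ℤ) - 1 - 1 = -(k : ℤ) - 2 := by ring
    have e2 : -(k : ℤ) - 1 - 2 = -(k : ℤ) - 3 := by ring
    have hstep : X ^ (-(k:ℤ) - 1) = X ^ (-(k:ℤ)) * X⁻¹ := by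
      rw [_root_.zpow_sub_one]
    have hr := hSrec (-(k:ℤ) - 1) t
    rw [e1, e2, hstep, Matrix.SpecialLinearGroup.coe_mul, ih, sl2_inv X, ht]
    have e3 : -(k : ℤ) - 1 - 1 = -(k : ℤ) - 2 := by ring
    rw [e3] at hr
    have e4 : -(k : ℤ) - 1 - 2 = -(k : ℤ) - 3 := by ring
    rw [e4] at hr
    simp only [sub_mul, smul_mul_assoc, mul_sub, mul_smul_comm, mul_one, one_mul, hCH]
    rw [hr]
    match_scalars <;> ring

lemma cheb_norm (S : ℤ → ℂ → ℂ)
    (hS0 : ∀ x : ℂ, S 0 x = 1) (hS1 : ∀ x : ℂ, S 1 x = x)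
    (hSrec : ∀ (j : ℤ) (x : ℂ), S j x = x * S (j - 1) x - S (j - 2) x)
    (x : ℂ) (j : ℤ) :
    S j x ^ 2 - x * S j x * S (j - 1) x + S (j - 1) x ^ 2 = 1 := by
  have hneg1 : S (-1) x = 0 := by
    have h := hSrec 1 x
    norm_num at h
    rw [hS0, hS1] at h
    linear_combination h
  induction j using Int.induction_on with
  | zero => norm_num [hS0, hneg1]
  | succ k ih =>
    have e1 : (k : ℤ) + 1 - 1 = k := by ring
    have e2 : (k : ℤ) + 1 - 2 = (k : ℤ) - 1 := by ring
    have hr := hSrec ((k:ℤ) + 1) x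
    rw [e1, e2] at hr
    rw [e1]
    linear_combination ih + (S ((k:ℤ)+1) x - S ((k:ℤ)-1) x) * hr
  | pred k ih =>
    have hr := hSrec (-(k:ℤ)) x
    have e1 : -(k : ℤ) - 1 - 1 = -(k : ℤ) - 2 := by ring
    rw [e1]
    linear_combination ih + (S (-(k:ℤ)-2) x - S (-(k:ℤ)) x) * hr

lemma mat2_ext (a b c d e f g h : ℂ) (h1 : a = e) (h2 : b = f) (h3 : c = g) (h4 : d = h) :
    !![a, b; c, d] = !![e, f; g, h] := by rw [h1, h2, h3, h4]

lemma smul_mat2 (r u a b c d : ℂ) :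
    r • !![a, b; c, d] - u • (1 : Matrix (Fin 2) (Fin 2) ℂ)
      = !![r * a - u, r * b; r * c, r * d - u] := by
  rw [← Matrix.ext_iff]
  simp only [Fin.forall_fin_two, Matrix.smul_apply, Matrix.sub_apply, Matrix.one_apply,
    smul_eq_mul, Matrix.cons_val_zero, Matrix.cons_val_one, Matrix.head_cons, Matrix.of_apply,
    Matrix.cons_val', Matrix.empty_val', Matrix.cons_val_fin_one, Matrix.head_fin_const]
  norm_num

theorem stmt14
    (M z : ℂ) (hM : M ≠ 0)
    (S : ℤ → ℂ → ℂ)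
    (hS0 : ∀ x : ℂ, S 0 x = 1) (hS1 : ∀ x : ℂ, S 1 x = x)
    (hSrec : ∀ (j : ℤ) (x : ℂ), S j x = x * S (j - 1) x - S (j - 2) x)
    (ρ : F2 →* SL2C)
    (ha : (ρ ga : Matrix (Fin 2) (Fin 2) ℂ) = !![M, 1; 0, M⁻¹])
    (hb : (ρ gb : Matrix (Fin 2) (Fin 2) ℂ) = !![M, 0; 2 - z, M⁻¹])
    (m n : ℤ) (hm : 0 ≤ m)
    (w : F2) (hw : w = (gb * ga⁻¹) ^ m * gb * ga * (gb⁻¹ * ga) ^ m)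
    (tm dm : ℂ)
    (htm : tm = (M ^ 2 + M⁻¹ ^ 2 + 2 - z)
        - (z - 2) * (z - M ^ 2 - M⁻¹ ^ 2) * S m z * S (m - 1) z)
    (hdm : dm = 1 - (z - M ^ 2 - M⁻¹ ^ 2) * S m z * (S m z - S (m - 1) z)) :
    (ρ (w ^ n) : Matrix (Fin 2) (Fin 2) ℂ) 0 0
        - (M - M⁻¹) * (ρ (w ^ n) : Matrix (Fin 2) (Fin 2) ℂ) 0 1
      = S n tm - dm * S (n - 1) tm ∧
    (n ≠ 0 →
      (ρ (w ^ n) * ρ ga = ρ gb * ρ (w ^ n) ↔ S n tm - dm * S (n - 1) tm = 0)) := by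
  have hMN : M * M⁻¹ = 1 := mul_inv_cancel₀ hM
  have hsp : S m z ^ 2 - z * S m z * S (m - 1) z + S (m - 1) z ^ 2 = 1 :=
    cheb_norm S hS0 hS1 hSrec z m
  have hq : S (m - 2) z = z * S (m - 1) z - S m z := by linear_combination hSrec m z
  -- explicit matrices for the generators and their inverses
  have hainv : ((ρ ga⁻¹ : SL2C) : Matrix (Fin 2) (Fin 2) ℂ) = !![M⁻¹, -1; 0, M] := by
    rw [_root_.map_inv, Matrix.SpecialLinearGroup.coe_inv, ha, Matrix.adjugate_fin_two_of, neg_zero]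
  have hbinv : ((ρ gb⁻¹ : SL2C) : Matrix (Fin 2) (Fin 2) ℂ) = !![M⁻¹, 0; z - 2, M] := by
    rw [_root_.map_inv, Matrix.SpecialLinearGroup.coe_inv, hb, Matrix.adjugate_fin_two_of, neg_zero]
    have e : -(2 - z) = z - 2 := by ring
    rw [e]
  have hC : ((ρ (gb * ga⁻¹) : SL2C) : Matrix (Fin 2) (Fin 2) ℂ)
      = !![1, -M; (2 - z) * M⁻¹, z - 1] := by
    rw [_root_.map_mul, Matrix.SpecialLinearGroup.coe_mul, hb, hainv, Matrix.mul_fin_two]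
    apply mat2_ext <;> first | ring1 | linear_combination hMN
  have hD : ((ρ (gb⁻¹ * ga) : SL2C) : Matrix (Fin 2) (Fin 2) ℂ)
      = !![1, M⁻¹; (z - 2) * M, z - 1] := by
    rw [_root_.map_mul, Matrix.SpecialLinearGroup.coe_mul, hbinv, ha, Matrix.mul_fin_two]
    apply mat2_ext <;> first | ring1 | linear_combination hMN
  have htrC : ((ρ (gb * ga⁻¹) : SL2C) : Matrix (Fin 2) (Fin 2) ℂ).trace = z := by
    rw [hC, Matrix.trace_fin_two_of]; ring
  have htrD : ((ρ (gb⁻¹ * ga) : SL2C) : Matrix (Fin 2) (Fin 2) ℂ).trace = z := by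
    rw [hD, Matrix.trace_fin_two_of]; ring
  have hCm : ((ρ ((gb * ga⁻¹) ^ m) : SL2C) : Matrix (Fin 2) (Fin 2) ℂ)
      = !![(S (m - 1) z) * 1 - (z * (S (m - 1) z) - (S m z)), (S (m - 1) z) * -M; (S (m - 1) z) * ((2 - z) * M⁻¹), (S (m - 1) z) * (z - 1) - (z * (S (m - 1) z) - (S m z))] := by
    rw [_root_.map_zpow, sl2_zpow S hS0 hS1 hSrec _ z htrC m, hC, hq, smul_mat2]
  have hDm : ((ρ ((gb⁻¹ * ga) ^ m) : SL2C) : Matrix (Fin 2) (Fin 2) ℂ)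
      = !![(S (m - 1) z) * 1 - (z * (S (m - 1) z) - (S m z)), (S (m - 1) z) * M⁻¹; (S (m - 1) z) * ((z - 2) * M), (S (m - 1) z) * (z - 1) - (z * (S (m - 1) z) - (S m z))] := by
    rw [_root_.map_zpow, sl2_zpow S hS0 hS1 hSrec _ z htrD m, hD, hq, smul_mat2]
  -- the explicit matrix of ρ w
  have hW : ((ρ w : SL2C) : Matrix (Fin 2) (Fin 2) ℂ)
      = !![2*(S (m - 1) z)^2 - z*(S (m - 1) z)^2 + M^2*(S (m - 1) z)^2 - 2*M^2*(S m z)*(S (m - 1) z) + M^2*(S m z)^2,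
           M⁻¹*(S (m - 1) z)^2 - M⁻¹*(S m z)*(S (m - 1) z) - M*(S m z)*(S (m - 1) z) + M*(S m z)^2;
           2*M⁻¹*(S (m - 1) z)^2 - 2*M⁻¹*(S m z)*(S (m - 1) z) - M⁻¹*z*(S (m - 1) z)^2 + M⁻¹*z*(S m z)*(S (m - 1) z) - 2*M*(S m z)*(S (m - 1) z) + 2*M*(S m z)^2 + M*z*(S m z)*(S (m - 1) z) - M*z*(S m z)^2,
           2*(S m z)^2 - z*(S m z)^2 + M⁻¹^2*(S (m - 1) z)^2 - 2*M⁻¹^2*(S m z)*(S (m - 1) z) + M⁻¹^2*(S m z)^2] := by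
    rw [hw]
    simp only [_root_.map_mul, Matrix.SpecialLinearGroup.coe_mul]
    rw [hCm, hDm, ha, hb, Matrix.mul_fin_two, Matrix.mul_fin_two, Matrix.mul_fin_two]
    apply mat2_ext
    · linear_combination (2*(S (m - 1) z)^2 - z*(S (m - 1) z)^2 + 2*M*M⁻¹*(S (m - 1) z)^2 - M*M⁻¹*z*(S (m - 1) z)^2) * hMN
    · linear_combination (M⁻¹*(S (m - 1) z)^2 - M⁻¹*(S m z)*(S (m - 1) z) - M*(S (m - 1) z)^2 + M*(S m z)*(S (m - 1) z)) * hMN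
    · linear_combination (2*M⁻¹*(S (m - 1) z)^2 - 2*M⁻¹*(S m z)*(S (m - 1) z) - M⁻¹*z*(S (m - 1) z)^2 + M⁻¹*z*(S m z)*(S (m - 1) z)
        - 2*M*(S (m - 1) z)^2 + 2*M*(S m z)*(S (m - 1) z) + M*z*(S (m - 1) z)^2 - M*z*(S m z)*(S (m - 1) z)) * hMN
    · linear_combination (-2*(S (m - 1) z)^2 + 4*(S m z)*(S (m - 1) z) + z*(S (m - 1) z)^2 - 2*z*(S m z)*(S (m - 1) z) + 2*M*M⁻¹*(S (m - 1) z)^2 - M*M⁻¹*z*(S (m - 1) z)^2) * hMN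
  have htr : ((ρ w : SL2C) : Matrix (Fin 2) (Fin 2) ℂ).trace = tm := by
    rw [hW, Matrix.trace_fin_two_of, htm]
    linear_combination (2 - z + M⁻¹^2 + M^2) * hsp
  have hkey : (2*(S (m - 1) z)^2 - z*(S (m - 1) z)^2 + M^2*(S (m - 1) z)^2 - 2*M^2*(S m z)*(S (m - 1) z) + M^2*(S m z)^2)
      - (M - M⁻¹) * (M⁻¹*(S (m - 1) z)^2 - M⁻¹*(S m z)*(S (m - 1) z) - M*(S m z)*(S (m - 1) z) + M*(S m z)^2) = tm - dm := by
    rw [htm, hdm]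
    linear_combination (1 - z + M⁻¹^2 + M^2) * hsp + ((S m z)^2 - (S (m - 1) z)^2) * hMN
  have hWn : ((ρ (w ^ n) : SL2C) : Matrix (Fin 2) (Fin 2) ℂ)
      = !![S (n-1) tm * (2*(S (m - 1) z)^2 - z*(S (m - 1) z)^2 + M^2*(S (m - 1) z)^2 - 2*M^2*(S m z)*(S (m - 1) z) + M^2*(S m z)^2) - S (n-2) tm,
           S (n-1) tm * (M⁻¹*(S (m - 1) z)^2 - M⁻¹*(S m z)*(S (m - 1) z) - M*(S m z)*(S (m - 1) z) + M*(S m z)^2);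
           S (n-1) tm * (2*M⁻¹*(S (m - 1) z)^2 - 2*M⁻¹*(S m z)*(S (m - 1) z) - M⁻¹*z*(S (m - 1) z)^2 + M⁻¹*z*(S m z)*(S (m - 1) z) - 2*M*(S m z)*(S (m - 1) z) + 2*M*(S m z)^2
              + M*z*(S m z)*(S (m - 1) z) - M*z*(S m z)^2),
           S (n-1) tm * (2*(S m z)^2 - z*(S m z)^2 + M⁻¹^2*(S (m - 1) z)^2 - 2*M⁻¹^2*(S m z)*(S (m - 1) z) + M⁻¹^2*(S m z)^2) - S (n-2) tm] := by
    rw [_root_.map_zpow, sl2_zpow S hS0 hS1 hSrec _ tm htr n, hW, smul_mat2]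
  constructor
  · rw [hWn]
    simp only [Matrix.cons_val', Matrix.cons_val_zero, Matrix.cons_val_one, Matrix.head_cons,
      Matrix.empty_val', Matrix.cons_val_fin_one, Matrix.head_fin_const, Matrix.of_apply]
    rw [hSrec n tm]
    linear_combination (S (n-1) tm) * hkey
  · intro _
    constructor
    · intro h
      have h01 := congrArg (fun g : SL2C => (g : Matrix (Fin 2) (Fin 2) ℂ) 0 1) h
      simp only [Matrix.SpecialLinearGroup.coe_mul] at h01
      rw [hWn, ha, hb, Matrix.mul_fin_two, Matrix.mul_fin_two] at h01
      simp only [Matrix.cons_val', Matrix.cons_val_zero, Matrix.cons_val_one, Matrix.head_cons,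
        Matrix.empty_val', Matrix.cons_val_fin_one, Matrix.head_fin_const, Matrix.of_apply] at h01
      rw [hSrec n tm]
      linear_combination h01 - (S (n-1) tm) * hkey
    · intro h0
      rw [hSrec n tm] at h0
      apply Subtype.coe_injective
      simp only [Matrix.SpecialLinearGroup.coe_mul]
      rw [hWn, ha, hb, Matrix.mul_fin_two, Matrix.mul_fin_two]
      apply mat2_ext <;>
        first
          | ring1
          | linear_combination h0 + (S (n-1) tm) * hkey
          | linear_combination (z - 2) * h0 + (z - 2) * (S (n-1) tm) * hkey
end

section
/- Let m ≥ 1 be an integer and let w = (ba⁻¹)^m·(b⁻¹a)^m in F. Then ρ(w) = [[w₁₁, w₁₂], [(2−z)w₁₂, w₂₂]] where (writing S_j for S_j(z)): w₁₁ = S_m² + (2 − 2z)S_mS_{m−1} + (1 + 2M² − 2z − M²z + z²)S_{m−1}², w₁₂ = (M⁻¹ − M)S_mS_{m−1} + (M⁻¹ + M − M⁻¹z)S_{m−1}², and w₂₂ = S_m² − 2S_mS_{m−1} + (1 + 2M⁻² − M⁻²z)S_{m−1}². -/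
open Matrix

lemma cheb_pow (S : ℤ → ℂ → ℂ)
    (hS0 : ∀ x : ℂ, S 0 x = 1) (hS1 : ∀ x : ℂ, S 1 x = x)
    (hSrec : ∀ (j : ℤ) (x : ℂ), S j x = x * S (j - 1) x - S (j - 2) x)
    (t : ℂ) (A : Matrix (Fin 2) (Fin 2) ℂ) (hA : A * A = t • A - 1) :
    ∀ n : ℕ, A ^ (n + 1) = S n t • A - S ((n : ℤ) - 1) t • 1 := by
  have hneg : S (-1) t = 0 := by
    have h := hSrec 1 t
    rw [show (1:ℤ) - 1 = 0 from rfl, show (1:ℤ) - 2 = -1 from rfl, hS0, hS1] at h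
    linear_combination h
  intro n
  induction n with
  | zero => simp [hS0, hneg]
  | succ n ih =>
    have hrec : S ((n : ℤ) + 1) t = t * S n t - S ((n : ℤ) - 1) t := by
      have h := hSrec ((n : ℤ) + 1) t
      rw [show (n:ℤ) + 1 - 1 = (n:ℤ) by ring, show (n:ℤ) + 1 - 2 = (n:ℤ) - 1 by ring] at h
      exact h
    rw [pow_succ', ih, mul_sub, mul_smul_comm, mul_smul_comm, hA, mul_one]
    push_cast
    rw [show ((n:ℤ) + 1 - 1) = (n:ℤ) by ring, hrec]
    module

theorem stmt15
    (M z : ℂ) (hM : M ≠ 0)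
    (S : ℤ → ℂ → ℂ)
    (hS0 : ∀ x : ℂ, S 0 x = 1) (hS1 : ∀ x : ℂ, S 1 x = x)
    (hSrec : ∀ (j : ℤ) (x : ℂ), S j x = x * S (j - 1) x - S (j - 2) x)
    (ρ : F2 →* SL2C)
    (ha : (ρ ga : Matrix (Fin 2) (Fin 2) ℂ) = !![M, 1; 0, M⁻¹])
    (hb : (ρ gb : Matrix (Fin 2) (Fin 2) ℂ) = !![M, 0; 2 - z, M⁻¹])
    (m : ℤ) (hm : 1 ≤ m)
    (w : F2) (hw : w = (gb * ga⁻¹) ^ m * (gb⁻¹ * ga) ^ m) :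
    (ρ w : Matrix (Fin 2) (Fin 2) ℂ)
      = !![S m z ^ 2 + (2 - 2 * z) * S m z * S (m - 1) z
              + (1 + 2 * M ^ 2 - 2 * z - M ^ 2 * z + z ^ 2) * S (m - 1) z ^ 2,
           (M⁻¹ - M) * S m z * S (m - 1) z + (M⁻¹ + M - M⁻¹ * z) * S (m - 1) z ^ 2;
           (2 - z) * ((M⁻¹ - M) * S m z * S (m - 1) z
              + (M⁻¹ + M - M⁻¹ * z) * S (m - 1) z ^ 2),
           S m z ^ 2 - 2 * S m z * S (m - 1) z
              + (1 + 2 * M⁻¹ ^ 2 - M⁻¹ ^ 2 * z) * S (m - 1) z ^ 2] := by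
  have hainv := Matrix.SpecialLinearGroup.coe_inv (ρ ga)
  rw [ha, Matrix.adjugate_fin_two] at hainv
  have hbinv := Matrix.SpecialLinearGroup.coe_inv (ρ gb)
  rw [hb, Matrix.adjugate_fin_two] at hbinv
  have hA : (ρ (gb * ga⁻¹) : Matrix (Fin 2) (Fin 2) ℂ)
      = !![1, -M; (2 - z) * M⁻¹, z - 1] := by
    rw [_root_.map_mul, map_inv, Matrix.SpecialLinearGroup.coe_mul, hb, hainv]
    ext i j
    fin_cases i <;> fin_cases j <;>
      (try simp [Matrix.mul_apply, Fin.sum_univ_two]) <;> (try field_simp) <;> ring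
  have hB : (ρ (gb⁻¹ * ga) : Matrix (Fin 2) (Fin 2) ℂ)
      = !![1, M⁻¹; (z - 2) * M, z - 1] := by
    rw [_root_.map_mul, map_inv, Matrix.SpecialLinearGroup.coe_mul, hbinv, ha]
    ext i j
    fin_cases i <;> fin_cases j <;>
      (try simp [Matrix.mul_apply, Fin.sum_univ_two]) <;> (try field_simp) <;> ring
  set A : Matrix (Fin 2) (Fin 2) ℂ := !![1, -M; (2 - z) * M⁻¹, z - 1] with hAdef
  set B : Matrix (Fin 2) (Fin 2) ℂ := !![1, M⁻¹; (z - 2) * M, z - 1] with hBdef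
  have hAsq : A * A = z • A - 1 := by
    ext i j
    fin_cases i <;> fin_cases j <;>
      (try simp [hAdef, Matrix.mul_apply, Fin.sum_univ_two, Matrix.one_apply]) <;>
      (try field_simp) <;> ring
  have hBsq : B * B = z • B - 1 := by
    ext i j
    fin_cases i <;> fin_cases j <;>
      (try simp [hBdef, Matrix.mul_apply, Fin.sum_univ_two, Matrix.one_apply]) <;>
      (try field_simp) <;> ring
  obtain ⟨n, rfl⟩ : ∃ n : ℕ, m = (n : ℤ) + 1 := by
    lift m to ℕ using (by linarith)
    obtain ⟨k, rfl⟩ := Nat.exists_eq_add_of_le (by exact_mod_cast hm : 1 ≤ m)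
    exact ⟨k, by push_cast; ring⟩
  have hρw : (ρ w : Matrix (Fin 2) (Fin 2) ℂ)
      = (S n z • A - S ((n : ℤ) - 1) z • 1) * (S n z • B - S ((n : ℤ) - 1) z • 1) := by
    rw [hw, _root_.map_mul, map_zpow, map_zpow, Matrix.SpecialLinearGroup.coe_mul]
    rw [show ((n : ℤ) + 1) = ((n + 1 : ℕ) : ℤ) by push_cast; ring, zpow_natCast,
      zpow_natCast, Matrix.SpecialLinearGroup.coe_pow, Matrix.SpecialLinearGroup.coe_pow,
      hA, hB, cheb_pow S hS0 hS1 hSrec z A hAsq n, cheb_pow S hS0 hS1 hSrec z B hBsq n]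
  have hidx1 : (n : ℤ) + 1 - 1 = (n : ℤ) := by ring
  have hs2 : S ((n : ℤ) - 1) z = z * S n z - S ((n : ℤ) + 1) z := by
    have h := hSrec ((n : ℤ) + 1) z
    rw [hidx1, show (n:ℤ) + 1 - 2 = (n:ℤ) - 1 by ring] at h
    linear_combination h
  rw [hρw, hidx1, hs2]
  ext i j
  fin_cases i <;> fin_cases j <;>
    (try simp [hAdef, hBdef, Matrix.mul_apply, Fin.sum_univ_two, Matrix.one_apply]) <;>
    (try field_simp) <;> ring
end

section
/- Let m ≥ 1 be an integer and let w = (ba⁻¹)^m·(b⁻¹a)^m in F. Then tr ρ(w) = 2 + (z − 2)(z − M² − M⁻²)·S_{m−1}(z)². -/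
open Matrix

theorem stmt16
    (M z : ℂ) (hM : M ≠ 0)
    (S : ℤ → ℂ → ℂ)
    (hS0 : ∀ x : ℂ, S 0 x = 1) (hS1 : ∀ x : ℂ, S 1 x = x)
    (hSrec : ∀ (j : ℤ) (x : ℂ), S j x = x * S (j - 1) x - S (j - 2) x)
    (ρ : F2 →* SL2C)
    (ha : (ρ ga : Matrix (Fin 2) (Fin 2) ℂ) = !![M, 1; 0, M⁻¹])
    (hb : (ρ gb : Matrix (Fin 2) (Fin 2) ℂ) = !![M, 0; 2 - z, M⁻¹])
    (m : ℤ) (hm : 1 ≤ m)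
    (w : F2) (hw : w = (gb * ga⁻¹) ^ m * (gb⁻¹ * ga) ^ m) :
    Matrix.trace (ρ w : Matrix (Fin 2) (Fin 2) ℂ)
      = 2 + (z - 2) * (z - M ^ 2 - M⁻¹ ^ 2) * S (m - 1) z ^ 2 := by
  have hSneg1 : S (-1) z = 0 := by
    have h := hSrec 1 z
    norm_num [hS0, hS1] at h
    linear_combination h
  have hstep : ∀ k : ℕ, S ((k : ℤ) + 1) z = z * S k z - S ((k : ℤ) - 1) z := by
    intro k
    have h := hSrec ((k : ℤ) + 1) z
    have e1 : ((k : ℤ) + 1) - 1 = (k : ℤ) := by ring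
    have e2 : ((k : ℤ) + 1) - 2 = (k : ℤ) - 1 := by ring
    rw [e1, e2] at h
    exact h
  -- explicit matrices
  set X : Matrix (Fin 2) (Fin 2) ℂ := !![1, -M; (2 - z) * M⁻¹, z - 1] with hXdef
  set Y : Matrix (Fin 2) (Fin 2) ℂ := !![1, M⁻¹; (z - 2) * M, z - 1] with hYdef
  have hAinv : (ρ ga⁻¹ : Matrix (Fin 2) (Fin 2) ℂ) = !![M⁻¹, -1; 0, M] := by
    rw [map_inv, Matrix.SpecialLinearGroup.coe_inv, ha, Matrix.adjugate_fin_two]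
    simp
  have hBinv : (ρ gb⁻¹ : Matrix (Fin 2) (Fin 2) ℂ) = !![M⁻¹, 0; -(2 - z), M] := by
    rw [map_inv, Matrix.SpecialLinearGroup.coe_inv, hb, Matrix.adjugate_fin_two]
    simp
  have hXr : (ρ (gb * ga⁻¹) : Matrix (Fin 2) (Fin 2) ℂ) = X := by
    rw [_root_.map_mul, Matrix.SpecialLinearGroup.coe_mul, hb, hAinv, Matrix.mul_fin_two, hXdef]
    congr 1 <;> field_simp <;> ring
  have hYr : (ρ (gb⁻¹ * ga) : Matrix (Fin 2) (Fin 2) ℂ) = Y := by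
    rw [_root_.map_mul, Matrix.SpecialLinearGroup.coe_mul, hBinv, ha, Matrix.mul_fin_two, hYdef]
    congr 1 <;> field_simp <;> ring
  -- Cayley-Hamilton relations
  have hX2 : X * X = z • X - 1 := by
    rw [hXdef, Matrix.mul_fin_two]
    ext i j
    fin_cases i <;> fin_cases j <;>
      simp [Matrix.smul_apply, Matrix.sub_apply, Matrix.one_apply, smul_eq_mul] <;>
      (try field_simp) <;> ring
  have hY2 : Y * Y = z • Y - 1 := by
    rw [hYdef, Matrix.mul_fin_two]
    ext i j
    fin_cases i <;> fin_cases j <;>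
      simp [Matrix.smul_apply, Matrix.sub_apply, Matrix.one_apply, smul_eq_mul] <;>
      (try field_simp) <;> ring
  -- power formula
  have hpow : ∀ (W : Matrix (Fin 2) (Fin 2) ℂ), W * W = z • W - 1 →
      ∀ n : ℕ, W ^ (n + 1) = S n z • W - S ((n : ℤ) - 1) z • 1 := by
    intro W hW n
    induction n with
    | zero => simp [hS0, hSneg1]
    | succ k ih =>
      have e : W ^ (k + 1 + 1) = W ^ (k + 1) * W := pow_succ W (k + 1)
      rw [e, ih, sub_mul, smul_mul_assoc, smul_mul_assoc, one_mul, hW]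
      have hs := hstep k
      have ecast : ((k + 1 : ℕ) : ℤ) = (k : ℤ) + 1 := by push_cast; ring
      rw [show (((k + 1 : ℕ) : ℤ)) = ((k : ℤ) + 1) from ecast] at *
      rw [hs]
      have e2 : ((k : ℤ) + 1) - 1 = (k : ℤ) := by ring
      rw [e2]
      rw [smul_sub, smul_smul]
      module
  -- identity S n ^2 - z S n S(n-1) + S(n-1)^2 = 1
  have hident : ∀ n : ℕ, S n z ^ 2 - z * S n z * S ((n : ℤ) - 1) z + S ((n : ℤ) - 1) z ^ 2 = 1 := by
    intro n
    induction n with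
    | zero => simp [hS0, hSneg1]
    | succ k ih =>
      have hs := hstep k
      have ecast : ((k + 1 : ℕ) : ℤ) = (k : ℤ) + 1 := by push_cast; ring
      rw [ecast]
      have e2 : ((k : ℤ) + 1) - 1 = (k : ℤ) := by ring
      rw [e2, hs]
      linear_combination ih
  -- decompose m
  obtain ⟨n, hn⟩ : ∃ n : ℕ, m = (n : ℤ) + 1 := ⟨(m - 1).toNat, by omega⟩
  have hwm : (ρ w : Matrix (Fin 2) (Fin 2) ℂ) = X ^ (n + 1) * Y ^ (n + 1) := by
    rw [hw, _root_.map_mul, _root_.map_zpow, _root_.map_zpow, hn]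
    rw [show ((n : ℤ) + 1) = ((n + 1 : ℕ) : ℤ) by push_cast; ring, zpow_natCast, zpow_natCast]
    rw [Matrix.SpecialLinearGroup.coe_mul, Matrix.SpecialLinearGroup.coe_pow, Matrix.SpecialLinearGroup.coe_pow,
      hXr, hYr]
  set p := S n z with hp
  set q := S ((n : ℤ) - 1) z with hq
  have hSm : S (m - 1) z = p := by rw [hn]; norm_num; rfl
  rw [hwm, hpow X hX2 n, hpow Y hY2 n, hSm]
  have expand : ((p • X - q • 1) * (p • Y - q • 1) : Matrix (Fin 2) (Fin 2) ℂ)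
      = (p * p) • (X * Y) - (p * q) • X - (q * p) • Y + (q * q) • (1 : Matrix (Fin 2) (Fin 2) ℂ) := by
    simp only [sub_mul, mul_sub, smul_mul_assoc, mul_smul_comm, smul_smul, one_mul, mul_one]
    module
  rw [expand]
  simp only [Matrix.trace_add, Matrix.trace_sub, Matrix.trace_smul, smul_eq_mul]
  have hXY : Matrix.trace (X * Y) = (z - 2) * (z - M ^ 2 - M⁻¹ ^ 2) + 2 := by
    rw [hXdef, hYdef, Matrix.mul_fin_two, Matrix.trace_fin_two_of]
    ring
  have htrX : Matrix.trace X = z := by rw [hXdef, Matrix.trace_fin_two_of]; ring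
  have htrY : Matrix.trace Y = z := by rw [hYdef, Matrix.trace_fin_two_of]; ring
  have htr1 : Matrix.trace (1 : Matrix (Fin 2) (Fin 2) ℂ) = 2 := by
    simp [Matrix.trace_one]
  rw [hXY, htrX, htrY, htr1]
  have := hident n
  linear_combination 2 * this
end
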